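/- Tail estimate in the proof of Theorem 2 (i): Let 1 < p ≤ 2 with conjugate exponent p', let 0 < γ ≤ 2(α+1)/p, let f belong to the Besov-type space B^{p,∞}_{γ,α} on the Jacobi hypergroup, and let s satisfy 2(α+1)p/(γp + 2(α+1)(p−1)) < s ≤ p'. Then there is a constant c > 0 such that for all t > k, ∫_k^t |𝓕(f)(x)|^s dx/|c(x)|² ≤ c ( t^{−γs + 2(α+1)(1 − s/p')} + 1 ), where k is the constant from the c-function estimates. -/

import Mathlib

open MeasureTheory Set Filter

/-- The `L^p` norm on `(0,∞)` with respect to the weighted measure `w(x) dx`. -/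
noncomputable def wLpNorm (w : ℝ → ℝ) (p : ℝ) (f : ℝ → ℂ) : ℝ :=
  (∫ x in Set.Ioi (0 : ℝ), ‖f x‖ ^ p * w x) ^ (1 / p)

/-- Membership in `L^p((0,∞), w(x) dx)`. -/
def MemW (w : ℝ → ℝ) (p : ℝ) (f : ℝ → ℂ) : Prop :=
  AEMeasurable f (volume.restrict (Set.Ioi (0 : ℝ))) ∧
    IntegrableOn (fun x => ‖f x‖ ^ p * w x) (Set.Ioi (0 : ℝ))

/-- The Jacobi hypergroup setting: the Chébli–Trimèche hypergroup `(ℝ₊, ∗(A))` with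
`A(x) = 2^(2ρ) (sinh x)^(2α+1) (cosh x)^(2β+1)`, `α ≥ β ≥ -1/2`, `α ≠ -1/2`,
`ρ = α + β + 1`.  Its characters are the Jacobi functions `φ_λ`, satisfying
`|1 - φ_λ(t)| ≥ c₀ min{1, (λt)²}`.  The density `cden = |c(λ)|⁻²` is even, continuous
and comparable to `|λ|^(2α+1)` for `|λ| > k` and to `|λ|²` for `|λ| ≤ k`.  The
generalized Fourier transform `FT` is given on `L¹_A` by
`𝓕(f)(λ) = ∫₀^∞ f(x) φ_λ(x) A(x) dx`; it satisfies `‖𝓕 f‖_∞ ≤ ‖f‖_{A,1}`, the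
Hausdorff–Young inequality, the Hardy–Littlewood inequality of Lemma 1 and the
translation identity `𝓕(τ_δ f)(λ) = φ_λ(δ) 𝓕(f)(λ)`, where the generalized
translations `τ_δ` are `L^p_A`-contractions. -/
structure JacobiHypergroup where
  α : ℝ
  β : ℝ
  ρ : ℝ
  hβα : β ≤ α
  hβ : -(1/2) ≤ β
  hα : α ≠ -(1/2)
  hρ : ρ = α + β + 1
  /-- the weight function `A` of the Jacobi hypergroup -/
  A : ℝ → ℝ
  hA : ∀ x : ℝ, 0 ≤ x →
    A x = (2 : ℝ) ^ (2 * ρ) * Real.sinh x ^ (2 * α + 1) * Real.cosh x ^ (2 * β + 1)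
  /-- the Jacobi functions `φ_λ`, the characters of the hypergroup -/
  φ : ℝ → ℝ → ℂ
  c₀ : ℝ
  hc₀ : 0 < c₀
  hφ_lower : ∀ lam t : ℝ, 0 < t →
    c₀ * min 1 ((lam * t) ^ 2) ≤ ‖1 - φ lam t‖
  /-- the density `|c(λ)|⁻²` of the Plancherel measure -/
  cden : ℝ → ℝ
  hcden_cont : Continuous cden
  hcden_even : ∀ x : ℝ, cden (-x) = cden x
  k : ℝ
  k₁ : ℝ
  k₂ : ℝ
  hk : 0 < k
  hk₁ : 0 < k₁
  hk₂ : 0 < k₂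
  hcden_hi : ∀ x : ℝ, k < |x| →
    k₁ * |x| ^ (2 * α + 1) ≤ cden x ∧ cden x ≤ k₂ * |x| ^ (2 * α + 1)
  hcden_lo : ∀ x : ℝ, |x| ≤ k →
    k₁ * |x| ^ (2 : ℝ) ≤ cden x ∧ cden x ≤ k₂ * |x| ^ (2 : ℝ)
  /-- the generalized Fourier transform -/
  FT : (ℝ → ℂ) → ℝ → ℂ
  hFT_def : ∀ f : ℝ → ℂ, MemW A 1 f → ∀ lam : ℝ,
    FT f lam = ∫ x in Set.Ioi (0 : ℝ), f x * φ lam x * (A x : ℂ)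
  hFT_meas : ∀ f : ℝ → ℂ, Measurable (FT f)
  hFT_sub : ∀ f g : ℝ → ℂ, ∀ lam : ℝ,
    FT (fun y => f y - g y) lam = FT f lam - FT g lam
  /-- `‖𝓕 f‖_∞ ≤ ‖f‖_{A,1}` -/
  hFT_sup : ∀ f : ℝ → ℂ, MemW A 1 f → ∀ lam : ℝ,
    ‖FT f lam‖ ≤ wLpNorm A 1 f
  /-- the Hausdorff–Young inequality `‖𝓕 f‖_{c,p'} ≤ C ‖f‖_{A,p}` -/
  hHY : ∀ p p' : ℝ, 1 < p → p ≤ 2 → 1 / p + 1 / p' = 1 →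
    ∃ C > (0 : ℝ), ∀ f : ℝ → ℂ, MemW A p f →
      (∫⁻ lam in Set.Ioi (0 : ℝ),
          ENNReal.ofReal (‖FT f lam‖ ^ p' * cden lam)) ^ (1 / p')
        ≤ ENNReal.ofReal (C * wLpNorm A p f)
  /-- the Hardy–Littlewood inequality of Lemma 1 (with the piecewise weight
  `g(t) = t³` for `t ≤ k`, `g(t) = t^(2(α+1))` for `t > k`) -/
  hHL : ∀ p : ℝ, 1 < p → p ≤ 2 →
    ∃ C > (0 : ℝ), ∀ f : ℝ → ℂ, MemW A p f →
      ∫⁻ x in Set.Ioi (0 : ℝ),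
          ENNReal.ofReal ((if x ≤ k then x ^ (3 : ℝ) else x ^ (2 * (α + 1))) ^ (p - 2) *
            ‖FT f x‖ ^ p * cden x)
        ≤ ENNReal.ofReal (C * wLpNorm A p f ^ p)
  /-- the generalized translation operators -/
  τ : ℝ → (ℝ → ℂ) → ℝ → ℂ
  hτ_contract : ∀ p : ℝ, 1 ≤ p → ∀ (δ : ℝ) (f : ℝ → ℂ), MemW A p f →
    MemW A p (τ δ f) ∧ wLpNorm A p (τ δ f) ≤ wLpNorm A p f
  hτ_diff : ∀ p : ℝ, 1 ≤ p → ∀ (δ : ℝ) (f : ℝ → ℂ), MemW A p f →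
    MemW A p (fun y => τ δ f y - f y)
  /-- the translation identity `𝓕(τ_δ f)(λ) = φ_λ(δ) 𝓕(f)(λ)` -/
  hτ_FT : ∀ p : ℝ, 1 ≤ p → p ≤ 2 → ∀ (δ : ℝ) (f : ℝ → ℂ), MemW A p f →
    ∀ᵐ lam ∂(volume.restrict (Set.Ioi (0 : ℝ))),
      FT (τ δ f) lam = φ lam δ * FT f lam

/-- The modulus of continuity of first order, `ω_{A,p}(f)(δ) = ‖τ_δ f - f‖_{A,p}`. -/
noncomputable def JacobiHypergroup.omega (S : JacobiHypergroup) (p : ℝ)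
    (f : ℝ → ℂ) (δ : ℝ) : ℝ :=
  wLpNorm S.A p (fun y => S.τ δ f y - f y)

/-!
On a dyadic annulus `R/2 < x ≤ R` with `R = 1/δ` one has `|1 - φ_x(δ)| ≥ c₀/4`, so the translation
identity and Hausdorff–Young bound the `L^{p'}` mass of `𝓕 f` there by `(ω(δ)/c₀)^{p'} ≲ R^{-γp'}`.
Hölder's inequality with exponents `p'/s` and `(1 - s/p')⁻¹` against the Plancherel density, whose mass
on the annulus is `≲ R^{2(α+1)}`, turns this into `≲ R^E` with `E = -γs + 2(α+1)(1 - s/p')`. The lower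
bound on `s` is exactly `E < 0`, so the dyadic pieces sum to a finite bound on all of `(k, ∞)`.
-/

open scoped ENNReal

theorem Ioi_subset_iUnion_Ioc_mul_two_pow {a : ℝ} (ha : 0 < a) :
    Ioi a ⊆ ⋃ n : ℕ, Ioc (a * 2 ^ n) (a * 2 ^ (n + 1)) := by
  intro x hx
  obtain ⟨n, hn_lo, hn_hi⟩ := exists_mem_Ioc_zpow (div_pos (ha.trans hx) ha) one_lt_two
  have hn : 0 ≤ n := by
    by_contra! hneg
    have : (2 : ℝ) ^ (n + 1) ≤ 1 := zpow_le_one_of_nonpos₀ one_le_two (by omega)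
    linarith [(one_lt_div ha).2 hx]
  lift n to ℕ using hn
  refine mem_iUnion.2 ⟨n, ?_, ?_⟩
  · simpa [mul_comm a, ← lt_div_iff₀ ha] using hn_lo
  · rw [← zpow_natCast, mul_comm a, ← div_le_iff₀ ha]
    exact_mod_cast hn_hi

theorem lintegral_Ioi_le_of_dyadic_le {g : ℝ → ℝ≥0∞} {a M E : ℝ} (ha : 0 < a) (hM : 0 ≤ M)
    (hE : E < 0) (h : ∀ R, 2 * a ≤ R → ∫⁻ x in Ioc (R / 2) R, g x ≤ ENNReal.ofReal (M * R ^ E)) :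
    ∫⁻ x in Ioi a, g x ≤ ENNReal.ofReal (M * (2 * a) ^ E / (1 - 2 ^ E)) := by
  have hr₀ : (0 : ℝ) < 2 ^ E := Real.rpow_pos_of_pos two_pos E
  have hr₁ : (2 : ℝ) ^ E < 1 := Real.rpow_lt_one_of_one_lt_of_neg one_lt_two hE
  have hM' : 0 ≤ M * (2 * a) ^ E := mul_nonneg hM (Real.rpow_nonneg (by positivity) E)
  have hannulus (n : ℕ) : ∫⁻ x in Ioc (a * 2 ^ n) (a * 2 ^ (n + 1)), g x
      ≤ ENNReal.ofReal (M * (2 * a) ^ E) * ENNReal.ofReal (2 ^ E) ^ n := by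
    have hR : a * 2 ^ (n + 1) = 2 * a * 2 ^ n := by ring
    have h2a : 2 * a ≤ a * 2 ^ (n + 1) := by
      rw [hR]
      exact le_mul_of_one_le_right (by positivity) (one_le_pow₀ one_le_two)
    have hpow : M * (a * 2 ^ (n + 1)) ^ E = M * (2 * a) ^ E * (2 ^ E) ^ n := by
      rw [hR, Real.mul_rpow (by positivity) (by positivity), ← Real.rpow_natCast,
        ← Real.rpow_mul zero_le_two, mul_comm (n : ℝ), Real.rpow_mul_natCast zero_le_two, mul_assoc]
    have hbound := h _ h2a
    rwa [show a * 2 ^ (n + 1) / 2 = a * 2 ^ n by ring, hpow, ENNReal.ofReal_mul hM',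
      ENNReal.ofReal_pow hr₀.le] at hbound
  calc ∫⁻ x in Ioi a, g x
      ≤ ∫⁻ x in ⋃ n : ℕ, Ioc (a * 2 ^ n) (a * 2 ^ (n + 1)), g x :=
        lintegral_mono_set (Ioi_subset_iUnion_Ioc_mul_two_pow ha)
    _ ≤ ∑' n : ℕ, ∫⁻ x in Ioc (a * 2 ^ n) (a * 2 ^ (n + 1)), g x := lintegral_iUnion_le _ _
    _ ≤ ∑' n : ℕ, ENNReal.ofReal (M * (2 * a) ^ E) * ENNReal.ofReal (2 ^ E) ^ n :=
        ENNReal.tsum_le_tsum hannulus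
    _ = ENNReal.ofReal (M * (2 * a) ^ E / (1 - 2 ^ E)) := by
        rw [ENNReal.tsum_mul_left, ENNReal.tsum_geometric, div_eq_mul_inv, ENNReal.ofReal_mul hM',
          ENNReal.ofReal_inv_of_pos (by linarith), ENNReal.ofReal_sub _ hr₀.le, ENNReal.ofReal_one]

theorem lintegral_rpow_mul_le_interpolation {α : Type*} [MeasurableSpace α] {μ : Measure α}
    {F w : α → ℝ≥0∞} (hF : AEMeasurable F μ) (hw : AEMeasurable w μ) {s q : ℝ}
    (hs : 0 ≤ s) (hsq : s ≤ q) (hq : 0 < q) :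
    ∫⁻ a, F a ^ s * w a ∂μ
      ≤ (∫⁻ a, F a ^ q * w a ∂μ) ^ (s / q) * (∫⁻ a, w a ∂μ) ^ (1 - s / q) := by
  have hθ : 0 ≤ s / q := div_nonneg hs hq.le
  have hθ' : 0 ≤ 1 - s / q := sub_nonneg.2 ((div_le_one hq).2 hsq)
  calc ∫⁻ a, F a ^ s * w a ∂μ
      = ∫⁻ a, (F a ^ q * w a) ^ (s / q) * w a ^ (1 - s / q) ∂μ := by
        refine lintegral_congr fun a => ?_
        rw [ENNReal.mul_rpow_of_nonneg _ _ hθ, ← ENNReal.rpow_mul, mul_div_cancel₀ s hq.ne',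
          mul_assoc, ← ENNReal.rpow_add_of_nonneg _ _ hθ hθ', add_sub_cancel, ENNReal.rpow_one]
    _ ≤ _ := ENNReal.lintegral_mul_norm_pow_le ((hF.pow_const q).mul hw) hw hθ hθ'
        (add_sub_cancel _ _)

theorem neg_mul_add_mul_one_sub_div_lt_zero {σ p p' γ s : ℝ} (hσ : 0 < σ) (hp : 1 < p)
    (hpp' : 1 / p + 1 / p' = 1) (hγ : 0 < γ) (hs : σ * p / (γ * p + σ * (p - 1)) < s) :
    -(γ * s) + σ * (1 - s / p') < 0 := by
  have hp₀ : 0 < p := by linarith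
  have hs' : σ * p < s * (γ * p + σ * (p - 1)) := (div_lt_iff₀ (by nlinarith)).1 hs
  have hsp' : s / p' = s * (p - 1) / p := by
    rw [div_eq_mul_one_div, eq_sub_of_add_eq' hpp']
    field_simp
  have hscaled : (-(γ * s) + σ * (1 - s / p')) * p = σ * p - s * (γ * p + σ * (p - 1)) := by
    rw [hsp']
    field_simp
    ring
  nlinarith

namespace JacobiHypergroup

variable (S : JacobiHypergroup)

theorem neg_half_lt_α : -(1 / 2) < S.α :=
  lt_of_le_of_ne (S.hβ.trans S.hβα) S.hα.symm

theorem cden_nonneg (x : ℝ) : 0 ≤ S.cden x := by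
  rcases le_or_gt |x| S.k with hx | hx
  · exact le_trans (by have := S.hk₁; positivity) (S.hcden_lo x hx).1
  · exact le_trans (by have := S.hk₁; positivity) (S.hcden_hi x hx).1

theorem lintegral_cden_Ioc_le {a b : ℝ} (ha : S.k ≤ a) (hab : a ≤ b) :
    ∫⁻ x in Ioc a b, ENNReal.ofReal (S.cden x)
      ≤ ENNReal.ofReal (S.k₂ * b ^ (2 * S.α + 1) * (b - a)) := by
  have hbound : ∀ x ∈ Ioc a b, S.cden x ≤ S.k₂ * b ^ (2 * S.α + 1) := by
    rintro x ⟨hax, hxb⟩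
    have hx : 0 < x := S.hk.trans_le ha |>.trans hax
    have hcden := (S.hcden_hi x (by rw [abs_of_pos hx]; linarith)).2
    rw [abs_of_pos hx] at hcden
    have h2α : 0 ≤ 2 * S.α + 1 := by linarith [S.neg_half_lt_α]
    exact hcden.trans (mul_le_mul_of_nonneg_left (Real.rpow_le_rpow hx.le hxb h2α) S.hk₂.le)
  calc ∫⁻ x in Ioc a b, ENNReal.ofReal (S.cden x)
      ≤ ∫⁻ _ in Ioc a b, ENNReal.ofReal (S.k₂ * b ^ (2 * S.α + 1)) :=
        setLIntegral_mono measurable_const fun x hx => ENNReal.ofReal_le_ofReal (hbound x hx)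
    _ = _ := by
        rw [setLIntegral_const, Real.volume_Ioc, ← ENNReal.ofReal_mul' (sub_nonneg.2 hab)]

theorem norm_FT_le_of_FT_translate {f : ℝ → ℂ} {δ x : ℝ} (hδ : 0 < δ) (hx : 1 / 2 ≤ x * δ)
    (hτ : S.FT (S.τ δ f) x = S.φ x δ * S.FT f x) :
    ‖S.FT f x‖ ≤ 4 / S.c₀ * ‖S.FT (fun y => S.τ δ f y - f y) x‖ := by
  have hφ : S.c₀ / 4 ≤ ‖1 - S.φ x δ‖ := by
    have hmin : 1 / 4 ≤ min 1 ((x * δ) ^ 2) := le_min (by norm_num) (by nlinarith)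
    calc S.c₀ / 4 = S.c₀ * (1 / 4) := by ring
      _ ≤ S.c₀ * min 1 ((x * δ) ^ 2) := mul_le_mul_of_nonneg_left hmin S.hc₀.le
      _ ≤ ‖1 - S.φ x δ‖ := S.hφ_lower x δ hδ
  rw [S.hFT_sub, hτ, ← sub_one_mul, norm_mul, norm_sub_rev]
  calc ‖S.FT f x‖ = 4 / S.c₀ * (S.c₀ / 4 * ‖S.FT f x‖) := by field_simp [S.hc₀.ne']
    _ ≤ 4 / S.c₀ * (‖1 - S.φ x δ‖ * ‖S.FT f x‖) := by have := S.hc₀; gcongr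

theorem exists_lintegral_FT_rpow_Ici_le_omega {p p' : ℝ} (hp : 1 < p) (hp2 : p ≤ 2)
    (hpp' : 1 / p + 1 / p' = 1) :
    ∃ C ≥ (0 : ℝ), ∀ f : ℝ → ℂ, MemW S.A p f → ∀ δ > (0 : ℝ),
      ∫⁻ x in Ici (2 * δ)⁻¹, ENNReal.ofReal (‖S.FT f x‖ ^ p' * S.cden x)
        ≤ ENNReal.ofReal (C * S.omega p f δ) ^ p' := by
  obtain ⟨CH, hCH, hHY⟩ := S.hHY p p' hp hp2 hpp'
  have hp' : 0 < p' := (Real.holderConjugate_iff.2 ⟨hp, by simpa only [one_div] using hpp'⟩).symm.pos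
  have hc₀ := S.hc₀
  refine ⟨4 / S.c₀ * CH, by positivity, fun f hf δ hδ => ?_⟩
  set g : ℝ → ℂ := fun y => S.τ δ f y - f y
  have hsub : Ici (2 * δ)⁻¹ ⊆ Ioi (0 : ℝ) := fun x hx =>
    (show (0 : ℝ) < (2 * δ)⁻¹ by positivity).trans_le hx
  have hpointwise : ∀ᵐ x ∂volume.restrict (Ici (2 * δ)⁻¹),
      ENNReal.ofReal (‖S.FT f x‖ ^ p' * S.cden x)
        ≤ ENNReal.ofReal (4 / S.c₀) ^ p' * ENNReal.ofReal (‖S.FT g x‖ ^ p' * S.cden x) := by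
    filter_upwards [ae_restrict_of_ae_restrict_of_subset hsub (S.hτ_FT p hp.le hp2 δ f hf),
      ae_restrict_mem measurableSet_Ici] with x hτ hx
    have hxδ : 1 / 2 ≤ x * δ := by
      rw [mem_Ici, inv_le_iff_one_le_mul₀ (by positivity)] at hx
      linarith
    rw [ENNReal.ofReal_rpow_of_nonneg (by positivity) hp'.le, ← ENNReal.ofReal_mul (by positivity),
      ← mul_assoc, ← Real.mul_rpow (by positivity) (norm_nonneg _)]
    gcongr
    · exact S.cden_nonneg x
    · exact S.norm_FT_le_of_FT_translate hδ hxδ hτ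
  have hHYg : ∫⁻ x in Ioi 0, ENNReal.ofReal (‖S.FT g x‖ ^ p' * S.cden x)
      ≤ ENNReal.ofReal (CH * S.omega p f δ) ^ p' := by
    rw [← ENNReal.rpow_inv_le_iff hp', ← one_div]
    exact hHY g (S.hτ_diff p hp.le δ f hf)
  calc ∫⁻ x in Ici (2 * δ)⁻¹, ENNReal.ofReal (‖S.FT f x‖ ^ p' * S.cden x)
      ≤ ∫⁻ x in Ici (2 * δ)⁻¹,
          ENNReal.ofReal (4 / S.c₀) ^ p' * ENNReal.ofReal (‖S.FT g x‖ ^ p' * S.cden x) :=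
        lintegral_mono_ae hpointwise
    _ = ENNReal.ofReal (4 / S.c₀) ^ p'
          * ∫⁻ x in Ici (2 * δ)⁻¹, ENNReal.ofReal (‖S.FT g x‖ ^ p' * S.cden x) :=
        lintegral_const_mul' _ _ (by finiteness)
    _ ≤ ENNReal.ofReal (4 / S.c₀) ^ p' * ENNReal.ofReal (CH * S.omega p f δ) ^ p' := by
        gcongr
        exact (lintegral_mono_set hsub).trans hHYg
    _ = ENNReal.ofReal (4 / S.c₀ * CH * S.omega p f δ) ^ p' := by
        rw [← ENNReal.mul_rpow_of_nonneg _ _ hp'.le, ← ENNReal.ofReal_mul (by positivity), mul_assoc]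

theorem exists_lintegral_FT_rpow_Ioc_le_of_besov {p p' γ : ℝ} (hp : 1 < p) (hp2 : p ≤ 2)
    (hpp' : 1 / p + 1 / p' = 1) {f : ℝ → ℂ} (hf : MemW S.A p f)
    (hBesov : ∃ B : ℝ, ∀ x > (0 : ℝ), S.omega p f x ≤ B * x ^ γ) :
    ∃ D ≥ (0 : ℝ), ∀ R > (0 : ℝ),
      ∫⁻ x in Ioc (R / 2) R, ENNReal.ofReal (‖S.FT f x‖ ^ p' * S.cden x)
        ≤ ENNReal.ofReal (D * R ^ (-γ)) ^ p' := by
  obtain ⟨C, hC, hFT⟩ := S.exists_lintegral_FT_rpow_Ici_le_omega hp hp2 hpp'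
  obtain ⟨B, hB⟩ := hBesov
  have hp' : 0 < p' := (Real.holderConjugate_iff.2 ⟨hp, by simpa only [one_div] using hpp'⟩).symm.pos
  refine ⟨C * max B 0, by positivity, fun R hR => ?_⟩
  have hω : C * S.omega p f R⁻¹ ≤ C * max B 0 * R ^ (-γ) := by
    rw [mul_assoc, Real.rpow_neg hR.le, ← Real.inv_rpow hR.le]
    gcongr
    exact (hB _ (inv_pos.2 hR)).trans (by gcongr; exact le_max_left _ _)
  calc ∫⁻ x in Ioc (R / 2) R, ENNReal.ofReal (‖S.FT f x‖ ^ p' * S.cden x)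
      ≤ ∫⁻ x in Ici (2 * R⁻¹)⁻¹, ENNReal.ofReal (‖S.FT f x‖ ^ p' * S.cden x) :=
        lintegral_mono_set fun x hx => by
          rw [mem_Ici, mul_inv, inv_inv, ← div_eq_inv_mul]
          exact hx.1.le
    _ ≤ ENNReal.ofReal (C * S.omega p f R⁻¹) ^ p' := hFT f hf _ (inv_pos.2 hR)
    _ ≤ ENNReal.ofReal (C * max B 0 * R ^ (-γ)) ^ p' := by gcongr

theorem lintegral_FT_rpow_Ioc_le {f : ℝ → ℂ} {p' γ s D : ℝ} (hD : 0 ≤ D) (hs : 0 < s)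
    (hsp' : s ≤ p')
    (hFT : ∀ R > (0 : ℝ), ∫⁻ x in Ioc (R / 2) R, ENNReal.ofReal (‖S.FT f x‖ ^ p' * S.cden x)
        ≤ ENNReal.ofReal (D * R ^ (-γ)) ^ p')
    {R : ℝ} (hR : 2 * S.k ≤ R) :
    ∫⁻ x in Ioc (R / 2) R, ENNReal.ofReal (‖S.FT f x‖ ^ s * S.cden x)
      ≤ ENNReal.ofReal (D ^ s * (S.k₂ / 2) ^ (1 - s / p')
          * R ^ (-(γ * s) + 2 * (S.α + 1) * (1 - s / p'))) := by
  have hp' : 0 < p' := hs.trans_le hsp'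
  have hR₀ : 0 < R := by linarith [S.hk]
  have hθ : 0 ≤ 1 - s / p' := sub_nonneg.2 ((div_le_one hp').2 hsp')
  have hk₂ := S.hk₂
  have hsplit : ∀ r : ℝ, 0 ≤ r → ∀ x, ENNReal.ofReal (‖S.FT f x‖ ^ r * S.cden x)
      = ENNReal.ofReal ‖S.FT f x‖ ^ r * ENNReal.ofReal (S.cden x) := fun r hr x => by
    rw [ENNReal.ofReal_mul (by positivity), ENNReal.ofReal_rpow_of_nonneg (norm_nonneg _) hr]
  have hvolume : R ^ (2 * S.α + 1) * (R - R / 2) = R ^ (2 * (S.α + 1)) / 2 := by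
    rw [show 2 * (S.α + 1) = 2 * S.α + 1 + 1 by ring, Real.rpow_add_one hR₀.ne' (2 * S.α + 1)]
    ring
  calc ∫⁻ x in Ioc (R / 2) R, ENNReal.ofReal (‖S.FT f x‖ ^ s * S.cden x)
      ≤ (∫⁻ x in Ioc (R / 2) R, ENNReal.ofReal (‖S.FT f x‖ ^ p' * S.cden x)) ^ (s / p')
          * (∫⁻ x in Ioc (R / 2) R, ENNReal.ofReal (S.cden x)) ^ (1 - s / p') := by
        simp only [hsplit s hs.le, hsplit p' hp'.le]
        exact lintegral_rpow_mul_le_interpolation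
          (S.hFT_meas f).norm.ennreal_ofReal.aemeasurable
          S.hcden_cont.measurable.ennreal_ofReal.aemeasurable hs.le hsp' hp'
    _ ≤ (ENNReal.ofReal (D * R ^ (-γ)) ^ p') ^ (s / p')
          * ENNReal.ofReal (S.k₂ * R ^ (2 * S.α + 1) * (R - R / 2)) ^ (1 - s / p') := by
        gcongr
        · exact hFT R hR₀
        · exact S.lintegral_cden_Ioc_le (by linarith) (by linarith)
    _ = _ := by
        rw [← ENNReal.rpow_mul, mul_div_cancel₀ s hp'.ne',
          ENNReal.ofReal_rpow_of_nonneg (by positivity) hs.le, mul_assoc, hvolume,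
          ENNReal.ofReal_rpow_of_nonneg (by positivity) hθ, ← ENNReal.ofReal_mul (by positivity),
          Real.mul_rpow hD (by positivity), Real.mul_rpow hk₂.le (by positivity),
          ← Real.rpow_mul hR₀.le, Real.div_rpow (by positivity) zero_le_two,
          ← Real.rpow_mul hR₀.le, Real.rpow_add hR₀, Real.div_rpow hk₂.le zero_le_two]
        ring_nf

end JacobiHypergroup

theorem theorem_two_i_tail_general (S : JacobiHypergroup) (p p' : ℝ) (hp : 1 < p)
    (hp2 : p ≤ 2) (hpp' : 1 / p + 1 / p' = 1) (γ : ℝ) (hγ : 0 < γ)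
    (f : ℝ → ℂ) (hf : MemW S.A p f)
    (hBesov : ∃ C : ℝ, ∀ x > (0 : ℝ), S.omega p f x ≤ C * x ^ γ)
    (s : ℝ) (hs1 : 2 * (S.α + 1) * p / (γ * p + 2 * (S.α + 1) * (p - 1)) < s)
    (hs2 : s ≤ p') :
    ∃ c > (0 : ℝ), ∀ t > S.k,
      ∫⁻ x in Set.Ioo S.k t,
          ENNReal.ofReal (‖S.FT f x‖ ^ s * S.cden x)
        ≤ ENNReal.ofReal (c * (t ^ (-(γ * s) + 2 * (S.α + 1) * (1 - s / p')) + 1)) := by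
  have hσ : 0 < 2 * (S.α + 1) := by linarith [S.neg_half_lt_α]
  have hs : 0 < s := lt_of_le_of_lt (div_nonneg (by positivity) (by nlinarith)) hs1
  set E := -(γ * s) + 2 * (S.α + 1) * (1 - s / p')
  have hE : E < 0 := neg_mul_add_mul_one_sub_div_lt_zero hσ hp hpp' hγ hs1
  obtain ⟨D, hD, hFT⟩ := S.exists_lintegral_FT_rpow_Ioc_le_of_besov hp hp2 hpp' hf hBesov
  set M := D ^ s * (S.k₂ / 2) ^ (1 - s / p')
  have hM : 0 ≤ M := by have := S.hk₂; positivity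
  have htail := lintegral_Ioi_le_of_dyadic_le S.hk hM hE
    fun R hR => S.lintegral_FT_rpow_Ioc_le hD hs hs2 hFT hR
  set c := M * (2 * S.k) ^ E / (1 - 2 ^ E)
  have hc : 0 ≤ c := div_nonneg (by have := S.hk; positivity)
    (sub_nonneg.2 (Real.rpow_le_one_of_one_le_of_nonpos one_le_two hE.le))
  refine ⟨c + 1, by positivity, fun t ht => ?_⟩
  have htE : 0 ≤ t ^ E := Real.rpow_nonneg (S.hk.le.trans ht.le) E
  calc ∫⁻ x in Ioo S.k t, ENNReal.ofReal (‖S.FT f x‖ ^ s * S.cden x)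
      ≤ ∫⁻ x in Ioi S.k, ENNReal.ofReal (‖S.FT f x‖ ^ s * S.cden x) :=
        lintegral_mono_set Ioo_subset_Ioi_self
    _ ≤ ENNReal.ofReal c := htail
    _ ≤ ENNReal.ofReal ((c + 1) * (t ^ E + 1)) := ENNReal.ofReal_le_ofReal (by nlinarith)

/-- **Tail estimate in the proof of Theorem 2 (i)**: let `1 < p ≤ 2` with conjugate
exponent `p'`, let `0 < γ ≤ 2(α+1)/p`, let `f` belong to the Besov-type space
`B^{p,∞}_{γ,α}` on the Jacobi hypergroup, and let `s` satisfy
`2(α+1)p/(γp + 2(α+1)(p-1)) < s ≤ p'`.  Then there is a constant `c > 0` such that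
for all `t > k`,
`∫_k^t |𝓕(f)(x)|^s dx/|c(x)|² ≤ c ( t^(-γs + 2(α+1)(1 - s/p')) + 1 )`,
where `k` is the constant from the `c`-function estimates. -/
theorem theorem_two_i_tail (S : JacobiHypergroup) (p p' : ℝ) (hp : 1 < p)
    (hp2 : p ≤ 2) (hpp' : 1 / p + 1 / p' = 1) (γ : ℝ) (hγ : 0 < γ)
    (hγ2 : γ ≤ 2 * (S.α + 1) / p)
    (f : ℝ → ℂ) (hf : MemW S.A p f)
    (hBesov : ∃ C : ℝ, ∀ x > (0 : ℝ), S.omega p f x ≤ C * x ^ γ)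
    (s : ℝ) (hs1 : 2 * (S.α + 1) * p / (γ * p + 2 * (S.α + 1) * (p - 1)) < s)
    (hs2 : s ≤ p') :
    ∃ c > (0 : ℝ), ∀ t > S.k,
      ∫⁻ x in Set.Ioo S.k t,
          ENNReal.ofReal (‖S.FT f x‖ ^ s * S.cden x)
        ≤ ENNReal.ofReal (c * (t ^ (-(γ * s) + 2 * (S.α + 1) * (1 - s / p')) + 1)) :=
  theorem_two_i_tail_general S p p' hp hp2 hpp' γ hγ f hf hBesov s hs1 hs2
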